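/- arXiv:2512.06427 — 3 statements merged into one kernel-verified Lean document; each statement's English description precedes it below -/
import Mathlib

section
/- For c_w with 0 < c_w < √3 and c_b ≥ 0, the map f(x) = c_b² + (c_w²/6)(1 − e^{−2x}) has a unique fixed point σ_a² ≥ 0, and every sequence defined by x_{ℓ+1} = f(x_ℓ) with x_0 ≥ 0 converges to σ_a² at an exponential (geometric) rate. -/
/-! On `[0, ∞)` the map `f` takes values in `[0, ∞)`, and since `x ↦ e^{-x}` is 1-Lipschitz
there, `f` is Lipschitz with constant `c_w² / 3`, which is `< 1` exactly when `c_w < √3`.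
Banach's fixed point theorem on the complete set `[0, ∞)` gives the unique fixed point, and the
iterates approach it at the geometric rate `(c_w² / 3)ⁿ`. -/

open Real Set Function NNReal

theorem LipschitzOnWith.exists_unique_fixedPoint_dist_iterate_le {α : Type*} [MetricSpace α]
    {f : α → α} {s : Set α} {K : ℝ≥0} (hsc : IsComplete s) (hne : s.Nonempty)
    (hsf : MapsTo f s s) (hK : K < 1) (hf : LipschitzOnWith K f s) :
    ∃ p ∈ s, IsFixedPt f p ∧ (∀ y ∈ s, IsFixedPt f y → y = p) ∧
      ∀ x ∈ s, ∀ n : ℕ, dist (f^[n] x) p ≤ dist x p * K ^ n := by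
  obtain ⟨x₀, hx₀⟩ := hne
  obtain ⟨p, hps, hfix, -⟩ := ContractingWith.exists_fixedPoint' hsc hsf
    ⟨hK, hsf.lipschitzOnWith_iff_restrict.1 hf⟩ hx₀ (edist_ne_top _ _)
  have contract : ∀ x ∈ s, dist (f x) p ≤ K * dist x p := fun x hx => by
    simpa only [hfix.eq] using hf.dist_le_mul x hx p hps
  refine ⟨p, hps, hfix, fun y hys hyfix => ?_, fun x hxs n => ?_⟩
  · have hle : dist y p ≤ K * dist y p := by simpa only [hyfix.eq] using contract y hys
    have hKlt : (K : ℝ) < 1 := hK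
    exact dist_le_zero.1 (by nlinarith [dist_nonneg (x := y) (y := p)])
  · induction n with
    | zero => simp
    | succ n ih =>
      calc dist (f^[n + 1] x) p = dist (f (f^[n] x)) p := by rw [iterate_succ_apply']
        _ ≤ K * dist (f^[n] x) p := contract _ (hsf.iterate n hxs)
        _ ≤ K * (dist x p * K ^ n) := by gcongr
        _ = dist x p * K ^ (n + 1) := by ring

theorem Function.eq_iterate_of_succ_eq {α : Type*} {f : α → α} {x : ℕ → α}
    (hx : ∀ n, x (n + 1) = f (x n)) (n : ℕ) : x n = f^[n] (x 0) := by
  induction n with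
  | zero => rfl
  | succ n ih => rw [iterate_succ_apply', hx n, ih]

theorem Real.abs_exp_neg_sub_exp_neg_le {a b : ℝ} (ha : 0 ≤ a) (hb : 0 ≤ b) :
    |exp (-a) - exp (-b)| ≤ |a - b| := by
  wlog hba : b ≤ a generalizing a b
  · rw [abs_sub_comm, abs_sub_comm a]
    exact this hb ha (le_of_not_ge hba)
  have hdiff : exp (-b) - exp (-a) ≤ a - b :=
    calc exp (-b) - exp (-a) = exp (-b) * (1 - exp (b - a)) := by
          rw [mul_sub, ← exp_add]; ring_nf
      _ ≤ 1 * (1 - exp (b - a)) := by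
          gcongr
          · exact sub_nonneg.2 (exp_le_one_iff.2 (by linarith))
          · exact exp_le_one_iff.2 (by linarith)
      _ ≤ a - b := by linarith [add_one_le_exp (b - a)]
  rw [abs_sub_comm, abs_of_nonneg (sub_nonneg.2 (exp_le_exp.2 (by linarith))),
    abs_of_nonneg (sub_nonneg.2 hba)]
  exact hdiff

noncomputable def sirenVarianceMap (cw cb : ℝ) (q : ℝ) : ℝ :=
  cb ^ 2 + cw ^ 2 / 6 * (1 - exp (-2 * q))

theorem mapsTo_sirenVarianceMap (cw cb : ℝ) :
    MapsTo (sirenVarianceMap cw cb) (Ici 0) (Ici 0) := fun q hq => by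
  have hexp : exp (-2 * q) ≤ 1 := exp_le_one_iff.2 (by linarith [mem_Ici.1 hq])
  exact add_nonneg (sq_nonneg cb) (mul_nonneg (by positivity) (sub_nonneg.2 hexp))

theorem lipschitzOnWith_sirenVarianceMap (cw cb : ℝ) :
    LipschitzOnWith (cw ^ 2 / 3).toNNReal (sirenVarianceMap cw cb) (Ici 0) := by
  refine LipschitzOnWith.of_dist_le_mul fun p hp q hq => ?_
  rw [Real.coe_toNNReal _ (by positivity), Real.dist_eq, Real.dist_eq]
  have hexp := abs_exp_neg_sub_exp_neg_le (a := 2 * q) (b := 2 * p)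
    (by linarith [mem_Ici.1 hq]) (by linarith [mem_Ici.1 hp])
  calc |sirenVarianceMap cw cb p - sirenVarianceMap cw cb q|
      = cw ^ 2 / 6 * |exp (-(2 * q)) - exp (-(2 * p))| := by
        rw [← abs_of_nonneg (by positivity : (0 : ℝ) ≤ cw ^ 2 / 6), ← abs_mul]
        simp only [sirenVarianceMap]; ring_nf
    _ ≤ cw ^ 2 / 6 * |2 * q - 2 * p| := by gcongr
    _ = cw ^ 2 / 3 * |p - q| := by
        rw [← mul_sub, abs_mul, abs_two, abs_sub_comm]; ring

theorem siren_variance_fixed_point_geometric_general (cw cb : ℝ)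
    (hcw0 : 0 < cw) (hcw : cw < Real.sqrt 3) :
    ∃ σa2 : ℝ, 0 ≤ σa2 ∧
      cb ^ 2 + cw ^ 2 / 6 * (1 - Real.exp (-2 * σa2)) = σa2 ∧
      (∀ y : ℝ, 0 ≤ y → cb ^ 2 + cw ^ 2 / 6 * (1 - Real.exp (-2 * y)) = y → y = σa2) ∧
      ∀ x : ℕ → ℝ, 0 ≤ x 0 →
        (∀ n, x (n + 1) = cb ^ 2 + cw ^ 2 / 6 * (1 - Real.exp (-2 * x n))) →
        ∃ C r : ℝ, 0 ≤ C ∧ 0 ≤ r ∧ r < 1 ∧ ∀ n, |x n - σa2| ≤ C * r ^ n := by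
  have hr : cw ^ 2 / 3 < 1 := by linarith [(lt_sqrt hcw0.le).1 hcw]
  obtain ⟨p, hp, hfix, huniq, hgeom⟩ :=
    (lipschitzOnWith_sirenVarianceMap cw cb).exists_unique_fixedPoint_dist_iterate_le
      isClosed_Ici.isComplete nonempty_Ici (mapsTo_sirenVarianceMap cw cb) (toNNReal_lt_one.2 hr)
  refine ⟨p, hp, hfix, huniq, fun x hx0 hx => ⟨|x 0 - p|, cw ^ 2 / 3, abs_nonneg _,
    by positivity, hr, fun n => ?_⟩⟩
  rw [eq_iterate_of_succ_eq (f := sirenVarianceMap cw cb) hx n]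
  simpa [Real.dist_eq, Real.coe_toNNReal _ (by positivity : (0 : ℝ) ≤ cw ^ 2 / 3)] using
    hgeom (x 0) hx0 n

/-- For `0 < c_w < √3` and `c_b ≥ 0`, the map `f(x) = c_b² + (c_w²/6)(1 − e^{−2x})`
has a unique nonnegative fixed point `σ_a²`, and every iterate sequence starting
from `x₀ ≥ 0` converges to it at a geometric rate. -/
theorem siren_variance_fixed_point_geometric (cw cb : ℝ)
    (hcw0 : 0 < cw) (hcw : cw < Real.sqrt 3) (hcb : 0 ≤ cb) :
    ∃ σa2 : ℝ, 0 ≤ σa2 ∧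
      cb ^ 2 + cw ^ 2 / 6 * (1 - Real.exp (-2 * σa2)) = σa2 ∧
      (∀ y : ℝ, 0 ≤ y → cb ^ 2 + cw ^ 2 / 6 * (1 - Real.exp (-2 * y)) = y → y = σa2) ∧
      ∀ x : ℕ → ℝ, 0 ≤ x 0 →
        (∀ n, x (n + 1) = cb ^ 2 + cw ^ 2 / 6 * (1 - Real.exp (-2 * x n))) →
        ∃ C r : ℝ, 0 ≤ C ∧ 0 ≤ r ∧ r < 1 ∧ ∀ n, |x n - σa2| ≤ C * r ^ n :=
  siren_variance_fixed_point_geometric_general cw cb hcw0 hcw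
end

section
/- For c_w = √3 and c_b = 0, the map f(x) = (1/2)(1 − e^{−2x}) has the unique nonnegative fixed point 0, and the iterates x_{ℓ+1} = f(x_ℓ) with x_0 > 0 converge to 0 with rate x_ℓ = Θ(1/ℓ); specifically x_ℓ ≤ x_0/(1 + ℓ·x_0) up to constants, since f(x) = x − x² + O(x³) near 0. -/
open Filter Real

private lemma siren_fpos {x : ℝ} (hx : 0 < x) : 0 < (1 - Real.exp (-2 * x)) / 2 := by
  have h : Real.exp (-2 * x) < 1 := by
    rw [Real.exp_lt_one_iff]; linarith
  linarith

private lemma siren_fhalf (x : ℝ) : (1 - Real.exp (-2 * x)) / 2 < 1 / 2 := by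
  have := Real.exp_pos (-2 * x); linarith

private lemma siren_flt {x : ℝ} (hx : 0 < x) : (1 - Real.exp (-2 * x)) / 2 < x := by
  have h := Real.add_one_lt_exp (x := -2 * x) (by nlinarith)
  linarith

/-- Lower bound: `f x ≥ x - x²` for `x ≥ 0`. -/
private lemma siren_flb {x : ℝ} (hx : 0 ≤ x) :
    x - x ^ 2 ≤ (1 - Real.exp (-2 * x)) / 2 := by
  have hE : 1 + 2 * x + 2 * x ^ 2 ≤ Real.exp (2 * x) := by
    have h := Real.sum_le_exp_of_nonneg (by linarith : (0:ℝ) ≤ 2 * x) 3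
    simp [Finset.sum_range_succ] at h
    nlinarith [h]
  have hEpos : (0:ℝ) < Real.exp (2 * x) := Real.exp_pos _
  have hkey : 1 ≤ (1 - 2 * x + 2 * x ^ 2) * Real.exp (2 * x) := by
    nlinarith [sq_nonneg x, sq_nonneg (x ^ 2), sq_nonneg (1 - x)]
  have hinv : Real.exp (-2 * x) * Real.exp (2 * x) = 1 := by
    rw [← Real.exp_add]; ring_nf; exact Real.exp_zero
  have hq : Real.exp (-2 * x) ≤ 1 - 2 * x + 2 * x ^ 2 := by
    have h2 : Real.exp (-2 * x) = (Real.exp (2 * x))⁻¹ := by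
      rw [show (-2 * x) = -(2 * x) by ring, Real.exp_neg]
    have := mul_le_mul_of_nonneg_right hkey (le_of_lt (inv_pos.mpr hEpos))
    rw [mul_assoc, mul_inv_cancel₀ (ne_of_gt hEpos)] at this
    rw [h2]
    simpa using this
  linarith

/-- Upper bound: `f x ≤ x - x²/2` for `0 ≤ x ≤ 1`. -/
private lemma siren_fub {x : ℝ} (hx : 0 ≤ x) (hx1 : x ≤ 1) :
    (1 - Real.exp (-2 * x)) / 2 ≤ x - x ^ 2 / 2 := by
  have h1 : 1 - x ≤ Real.exp (-x) := by
    have := Real.add_one_le_exp (-x); linarith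
  have h1' : (0:ℝ) ≤ 1 - x := by linarith
  have h2 : (1 - x) ^ 2 ≤ Real.exp (-2 * x) := by
    have : Real.exp (-2 * x) = Real.exp (-x) * Real.exp (-x) := by
      rw [← Real.exp_add]; ring_nf
    rw [this, sq]
    exact mul_le_mul h1 h1 h1' (le_trans h1' h1)
  nlinarith

/-- For `c_w = √3`, `c_b = 0`, the map `f(x) = (1 − e^{−2x})/2` has `0` as its unique
nonnegative fixed point, and iterates starting from `x₀ > 0` converge to `0` at rate
`Θ(1/ℓ)`. -/
theorem siren_critical_variance_rate :
    ((1 - Real.exp (-2 * (0 : ℝ))) / 2 = 0) ∧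
    (∀ y : ℝ, 0 ≤ y → (1 - Real.exp (-2 * y)) / 2 = y → y = 0) ∧
    ∀ x : ℕ → ℝ, 0 < x 0 →
      (∀ n, x (n + 1) = (1 - Real.exp (-2 * x n)) / 2) →
      Tendsto x atTop (nhds 0) ∧
      ∃ c₁ c₂ : ℝ, 0 < c₁ ∧ 0 < c₂ ∧
        ∀ n : ℕ, 1 ≤ n → c₁ / n ≤ x n ∧ x n ≤ c₂ / n := by
  refine ⟨by norm_num, ?_, ?_⟩
  · intro y hy hfix
    by_contra hne
    have hpos : 0 < y := lt_of_le_of_ne hy (Ne.symm hne)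
    have := siren_flt hpos
    linarith
  intro x hx0 hrec
  -- positivity of all iterates
  have hpos : ∀ n, 0 < x n := by
    intro n
    induction n with
    | zero => exact hx0
    | succ k ih => rw [hrec k]; exact siren_fpos ih
  -- all iterates from index 1 are below 1/2
  have hhalf : ∀ n, x (n + 1) < 1 / 2 := by
    intro n; rw [hrec n]; exact siren_fhalf _
  -- upper bound: x (n+1) ≤ 2 / (n+2)
  have hupper : ∀ n : ℕ, x (n + 1) ≤ 2 / (n + 2 : ℝ) := by
    intro n
    induction n with
    | zero =>
      have := hhalf 0
      norm_num
      linarith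
    | succ k ih =>
      have hk1 : x (k + 1) ≤ 1 := le_of_lt (lt_trans (hhalf k) (by norm_num))
      have hk0 : 0 ≤ x (k + 1) := le_of_lt (hpos _)
      have hstep : x (k + 2) ≤ x (k + 1) - x (k + 1) ^ 2 / 2 := by
        rw [hrec (k + 1)]; exact siren_fub hk0 hk1
      have hcast : (0:ℝ) < (k : ℝ) + 2 := by positivity
      have hcast3 : (0:ℝ) < (k : ℝ) + 3 := by positivity
      have ha1 : 2 / ((k:ℝ) + 2) ≤ 1 := by
        rw [div_le_one hcast]; linarith [Nat.cast_nonneg (α := ℝ) k]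
      have hmono : x (k + 1) - x (k + 1) ^ 2 / 2 ≤
          2 / ((k:ℝ) + 2) - (2 / ((k:ℝ) + 2)) ^ 2 / 2 := by
        nlinarith [mul_nonneg (sub_nonneg.mpr ih)
          (by linarith : (0:ℝ) ≤ 2 - 2 / ((k:ℝ) + 2) - x (k + 1))]
      have heq : 2 / ((k:ℝ) + 2) - (2 / ((k:ℝ) + 2)) ^ 2 / 2
          = 2 * ((k:ℝ) + 1) / ((k:ℝ) + 2) ^ 2 := by
        field_simp; ring
      have hfinal : 2 / ((k:ℝ) + 2) - (2 / ((k:ℝ) + 2)) ^ 2 / 2 ≤ 2 / ((k:ℝ) + 3) := by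
        rw [heq, div_le_div_iff₀ (by positivity) hcast3]
        nlinarith [Nat.cast_nonneg (α := ℝ) k]
      push_cast
      calc x (k + 1 + 1) ≤ x (k + 1) - x (k + 1) ^ 2 / 2 := hstep
        _ ≤ 2 / ((k:ℝ) + 2) - (2 / ((k:ℝ) + 2)) ^ 2 / 2 := hmono
        _ ≤ 2 / ((k:ℝ) + 3) := hfinal
        _ ≤ 2 / ((k:ℝ) + 1 + 2) := le_of_eq (by ring_nf)
  -- lower bound: x (n+1) ≥ 1 / (1 / x 1 + 2 n)
  have hx1pos : 0 < x 1 := hpos 1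
  have hx1half : x 1 < 1 / 2 := hhalf 0
  have hlower : ∀ n : ℕ, 1 / (1 / x 1 + 2 * n) ≤ x (n + 1) := by
    intro n
    induction n with
    | zero => simp
    | succ k ih =>
      have hDpos : (0:ℝ) < 1 / x 1 + 2 * k := by positivity
      have hD'pos : (0:ℝ) < 1 / x 1 + 2 * (k + 1) := by positivity
      have hainv : 1 / (1 / x 1 + 2 * k) ≤ 1 / 2 := by
        rw [div_le_div_iff₀ hDpos (by norm_num)]
        have : (2:ℝ) < 1 / x 1 := by
          rw [lt_div_iff₀ hx1pos]; linarith
        linarith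
      have hxk0 : 0 < x (k + 1) := hpos _
      have hxkh : x (k + 1) < 1 / 2 := hhalf k
      have hstep : x (k + 1) - x (k + 1) ^ 2 ≤ x (k + 2) := by
        rw [hrec (k + 1)]; exact siren_flb (le_of_lt hxk0)
      -- h(x) = x - x² is monotone on [0, 1/2]
      set a := 1 / (1 / x 1 + 2 * (k:ℝ)) with ha
      have hapos : 0 < a := by positivity
      have hmono : a - a ^ 2 ≤ x (k + 1) - x (k + 1) ^ 2 := by
        nlinarith [ih, hainv, hxkh]
      have hfinal : 1 / (1 / x 1 + 2 * ((k:ℝ) + 1)) ≤ a - a ^ 2 := by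
        rw [ha]
        rw [div_le_iff₀ hD'pos] at *
        have h1 : a * (1 / x 1 + 2 * (k:ℝ)) = 1 := by
          rw [ha]; field_simp
        nlinarith [h1, hapos, mul_pos hapos hapos]
      push_cast
      calc (1:ℝ) / (1 / x 1 + 2 * ((k:ℝ) + 1)) ≤ a - a ^ 2 := hfinal
        _ ≤ x (k + 1) - x (k + 1) ^ 2 := hmono
        _ ≤ x (k + 2) := hstep
  constructor
  · -- convergence via squeeze
    apply squeeze_zero' (t₀ := atTop) (g := fun n : ℕ => 2 / (n : ℝ))
    · exact Eventually.of_forall fun n => le_of_lt (hpos n)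
    · filter_upwards [eventually_ge_atTop 1] with n hn
      obtain ⟨m, rfl⟩ := Nat.exists_eq_add_of_le hn
      have := hupper m
      have hm : (0:ℝ) < (m:ℝ) + 1 := by positivity
      have : 2 / ((m:ℝ) + 2) ≤ 2 / ((m:ℝ) + 1) := by
        apply div_le_div_of_nonneg_left (by norm_num) hm (by linarith)
      push_cast
      calc x (1 + m) = x (m + 1) := by ring_nf
        _ ≤ 2 / ((m:ℝ) + 2) := hupper m
        _ ≤ 2 / ((m:ℝ) + 1) := this
        _ = 2 / ((1:ℝ) + m) := by ring_nf
    · exact tendsto_const_div_atTop_nhds_zero_nat 2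
  · refine ⟨x 1, 2, hx1pos, by norm_num, ?_⟩
    intro n hn
    obtain ⟨m, rfl⟩ := Nat.exists_eq_add_of_le hn
    have heq : 1 + m = m + 1 := by ring
    rw [heq]
    have hm1 : (0:ℝ) < (m:ℝ) + 1 := by positivity
    constructor
    · -- x 1 / (m+1) ≤ x (m+1)
      have hlow := hlower m
      have hcomp : x 1 / ((m:ℝ) + 1) ≤ 1 / (1 / x 1 + 2 * m) := by
        rw [div_le_div_iff₀ hm1 (by positivity)]
        have h1 : x 1 * (1 / x 1) = 1 := by field_simp
        nlinarith [hx1half, hx1pos, h1,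
          mul_nonneg (le_of_lt hx1pos) (Nat.cast_nonneg m : (0:ℝ) ≤ m)]
      push_cast
      calc x 1 / ((m:ℝ) + 1) ≤ 1 / (1 / x 1 + 2 * m) := hcomp
        _ ≤ x (m + 1) := hlow
    · have := hupper m
      have hcomp : 2 / ((m:ℝ) + 2) ≤ 2 / ((m:ℝ) + 1) :=
        div_le_div_of_nonneg_left (by norm_num) hm1 (by linarith)
      push_cast
      linarith
end

section
/- Suppose σ_a² is the fixed point satisfying σ_a² = c_b² + (c_w²/6)(1 − e^{−2σ_a²}) and additionally (c_w²/6)(1 + e^{−2σ_a²}) = 1. Then c_b² = 1 − c_w²/3 − (1/2) log(6/c_w² − 1), valid for √3 ≤ c_w < √6 with the right-hand side nonnegative. -/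
open Real

/-- If `σ_a²` satisfies the fixed-point equation `σ_a² = c_b² + (c_w²/6)(1 − e^{−2σ_a²})`
and the gradient-normalization `(c_w²/6)(1 + e^{−2σ_a²}) = 1`, then
`c_b² = 1 − c_w²/3 − (1/2) log(6/c_w² − 1)`, for `√3 ≤ c_w < √6`, with the right-hand
side nonnegative. -/
theorem siren_initialization_curve (cw cb σa2 : ℝ)
    (hcw1 : Real.sqrt 3 ≤ cw) (hcw2 : cw < Real.sqrt 6)
    (hfix : σa2 = cb ^ 2 + cw ^ 2 / 6 * (1 - Real.exp (-2 * σa2)))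
    (hgrad : cw ^ 2 / 6 * (1 + Real.exp (-2 * σa2)) = 1) :
    cb ^ 2 = 1 - cw ^ 2 / 3 - (1 / 2) * Real.log (6 / cw ^ 2 - 1) ∧
    0 ≤ 1 - cw ^ 2 / 3 - (1 / 2) * Real.log (6 / cw ^ 2 - 1) := by
  have hcwpos : 0 < cw := lt_of_lt_of_le (Real.sqrt_pos.mpr (by norm_num)) hcw1
  have hcw2pos : 0 < cw ^ 2 := by positivity
  have hexp : Real.exp (-2 * σa2) = 6 / cw ^ 2 - 1 := by
    field_simp at hgrad ⊢
    linarith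
  have hlog : Real.log (6 / cw ^ 2 - 1) = -2 * σa2 := by
    rw [← hexp, Real.log_exp]
  have hmain : cb ^ 2 = 1 - cw ^ 2 / 3 - (1 / 2) * Real.log (6 / cw ^ 2 - 1) := by
    rw [hlog]
    rw [hexp] at hfix
    field_simp at hfix ⊢
    nlinarith [hfix]
  exact ⟨hmain, hmain ▸ sq_nonneg cb⟩
end
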